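/- Let C be a commutative ring, σ an automorphism with σ^n = id, u a unit fixed by σ, and ℛ = C[x;σ]/⟨x^n − u⟩. Let f ∈ C[x;σ] be monic with x^n − u = f·h for some h. Then the right annihilator of the left ideal ℛf in ℛ is the right ideal hℛ. -/

import Mathlib

/-! Since `σ^n = id` and `σ u = u`, the element `z = x^n - u` is central, so `s ∈ S` maps to `0`
in `ℛ` iff `s ∈ zS`. A monic `f` of degree `d` is left regular in `S`: the coefficient of `f t` in
degree `d + deg t` is `σ^d` of the leading coefficient of `t`. Hence `f̄ t̄ = 0` gives
`f t = z w = f (h w)`, so `t = h w`; conversely `f̄ h̄ = z̄ = 0`. -/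

section SkewPolynomial

variable {C S : Type*} [Semiring C] [Semiring S] {σ : C →+* C} {ι : C →+* S} {x : S}
  {rep : (ℕ →₀ C) ≃+ S}

theorem pow_mul_eq_iterate_mul_pow (hx : ∀ a : C, x * ι a = ι (σ a) * x) (k : ℕ) (a : C) :
    x ^ k * ι a = ι (σ^[k] a) * x ^ k := by
  induction k generalizing a with
  | zero => simp
  | succ k ih =>
    rw [Function.iterate_succ_apply, pow_succ, mul_assoc, hx, ← mul_assoc, ih, mul_assoc,
      ← pow_succ]

theorem monomial_mul_monomial (hx : ∀ a : C, x * ι a = ι (σ a) * x) (a b : C) (i j : ℕ) :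
    (ι a * x ^ i) * (ι b * x ^ j) = ι (a * σ^[i] b) * x ^ (i + j) := by
  rw [mul_assoc, ← mul_assoc (x ^ i), pow_mul_eq_iterate_mul_pow hx, map_mul, pow_add,
    mul_assoc, mul_assoc]

theorem eq_sum_monomial (hrep : ∀ p : ℕ →₀ C, rep p = ∑ k ∈ p.support, ι (p k) * x ^ k)
    (p : S) : p = ∑ k ∈ (rep.symm p).support, ι (rep.symm p k) * x ^ k := by
  conv_lhs => rw [← rep.apply_symm_apply p, hrep]

theorem rep_single (hrep : ∀ p : ℕ →₀ C, rep p = ∑ k ∈ p.support, ι (p k) * x ^ k)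
    (k : ℕ) (a : C) : rep (Finsupp.single k a) = ι a * x ^ k := by
  rcases eq_or_ne a 0 with rfl | ha
  · simp [hrep]
  · rw [hrep, Finsupp.support_single _ ha, Finset.sum_singleton, Finsupp.single_eq_same]

theorem symm_rep_mul (hx : ∀ a : C, x * ι a = ι (σ a) * x)
    (hrep : ∀ p : ℕ →₀ C, rep p = ∑ k ∈ p.support, ι (p k) * x ^ k) (p q : S) :
    rep.symm (p * q) = ∑ i ∈ (rep.symm p).support, ∑ j ∈ (rep.symm q).support,
      Finsupp.single (i + j) (rep.symm p i * σ^[i] (rep.symm q j)) := by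
  rw [rep.symm_apply_eq, map_sum]
  conv_lhs => rw [eq_sum_monomial hrep p, eq_sum_monomial hrep q, Finset.sum_mul]
  refine Finset.sum_congr rfl fun i _ => ?_
  rw [map_sum, Finset.mul_sum]
  refine Finset.sum_congr rfl fun j _ => ?_
  rw [rep_single hrep, monomial_mul_monomial hx]

theorem symm_rep_mul_apply_add (hx : ∀ a : C, x * ι a = ι (σ a) * x)
    (hrep : ∀ p : ℕ →₀ C, rep p = ∑ k ∈ p.support, ι (p k) * x ^ k) {p q : S} {d e : ℕ}
    (hp : ∀ i, d < i → rep.symm p i = 0) (hq : ∀ j, e < j → rep.symm q j = 0) :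
    rep.symm (p * q) (d + e) = rep.symm p d * σ^[d] (rep.symm q e) := by
  classical
  rw [symm_rep_mul hx hrep, Finset.sum_apply', Finset.sum_eq_single d]
  · rw [Finset.sum_apply', Finset.sum_eq_single e]
    · exact Finsupp.single_eq_same
    · intro j _ hje
      exact Finsupp.single_eq_of_ne (by omega)
    · intro he
      rw [Finsupp.notMem_support_iff.1 he, Function.iterate_fixed (map_zero σ), mul_zero,
        Finsupp.single_zero, Finsupp.zero_apply]
  · intro i hi hid
    rw [Finset.sum_apply']
    refine Finset.sum_eq_zero fun j hj => Finsupp.single_eq_of_ne ?_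
    have hi_le : i ≤ d := not_lt.1 fun h => Finsupp.mem_support_iff.1 hi (hp i h)
    have hj_le : j ≤ e := not_lt.1 fun h => Finsupp.mem_support_iff.1 hj (hq j h)
    omega
  · intro hd
    rw [Finset.sum_apply']
    refine Finset.sum_eq_zero fun j _ => ?_
    rw [Finsupp.notMem_support_iff.1 hd, zero_mul, Finsupp.single_zero, Finsupp.zero_apply]

theorem eq_zero_of_monic_mul_eq_zero (hx : ∀ a : C, x * ι a = ι (σ a) * x)
    (hrep : ∀ p : ℕ →₀ C, rep p = ∑ k ∈ p.support, ι (p k) * x ^ k) (hσ : Function.Injective σ)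
    {f : S} {d : ℕ} (hfd : rep.symm f d = 1) (hf : ∀ k, d < k → rep.symm f k = 0)
    {t : S} (hft : f * t = 0) : t = 0 := by
  by_contra ht
  have hsupp : (rep.symm t).support.Nonempty := by simpa using ht
  set e := (rep.symm t).support.max' hsupp
  have hlead := symm_rep_mul_apply_add hx hrep hf (q := t) (e := e)
    fun j hj => Finsupp.notMem_support_iff.1 fun hj' => (Finset.le_max' _ _ hj').not_gt hj
  rw [hft, hfd, one_mul, map_zero, Finsupp.zero_apply] at hlead
  have hte : rep.symm t e = 0 :=
    hσ.iterate d (by rw [← hlead, Function.iterate_fixed (map_zero σ)])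
  exact Finsupp.mem_support_iff.1 (Finset.max'_mem _ hsupp) hte

theorem commute_of_commute_coeff_of_commute
    (hrep : ∀ p : ℕ →₀ C, rep p = ∑ k ∈ p.support, ι (p k) * x ^ k) {y : S}
    (hι : ∀ a, Commute y (ι a)) (hy : Commute y x) (s : S) : Commute y s := by
  rw [eq_sum_monomial hrep s]
  exact Commute.sum_right _ _ _ fun k _ => (hι _).mul_right (hy.pow_right k)

end SkewPolynomial

theorem commute_pow_sub_of_iterate_eq_self {C S : Type*} [CommSemiring C] [Ring S]
    {σ : C →+* C} {ι : C →+* S} {x : S} {rep : (ℕ →₀ C) ≃+ S}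
    (hx : ∀ a : C, x * ι a = ι (σ a) * x)
    (hrep : ∀ p : ℕ →₀ C, rep p = ∑ k ∈ p.support, ι (p k) * x ^ k)
    {n : ℕ} (hσn : ∀ a : C, σ^[n] a = a) {u : C} (hu : σ u = u) (s : S) :
    Commute (x ^ n - ι u) s := by
  refine commute_of_commute_coeff_of_commute hrep (fun a => ?_) ?_ s
  · refine Commute.sub_left ?_ ((Commute.all u a).map ι)
    rw [Commute, SemiconjBy, pow_mul_eq_iterate_mul_pow hx, hσn]
  · refine Commute.sub_left (Commute.self_pow x n).symm ?_
    rw [Commute, SemiconjBy, hx, hu]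

section CentralQuotient

variable {S : Type*} [Ring S] {z : S}

theorem Ideal.isTwoSided_span_singleton_of_commute (hz : ∀ s, Commute z s) :
    (Ideal.span {z}).IsTwoSided where
  mul_mem_of_left b ha := by
    obtain ⟨a, rfl⟩ := Ideal.mem_span_singleton'.1 ha
    rw [mul_assoc, (hz b).eq, ← mul_assoc]
    exact Ideal.mul_mem_left _ _ (Ideal.mem_span_singleton_self z)

theorem RingQuot.mkRingHom_eq_zero_iff_of_commute (hz : ∀ s, Commute z s) (a : S) :
    RingQuot.mkRingHom (fun a b : S => a = z ∧ b = 0) a = 0 ↔ ∃ w, a = z * w := by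
  have : (Ideal.span {z}).IsTwoSided := Ideal.isTwoSided_span_singleton_of_commute hz
  constructor
  · intro ha
    have hrel : ∀ ⦃p q : S⦄, p = z ∧ q = 0 →
        Ideal.Quotient.mk (Ideal.span {z}) p = Ideal.Quotient.mk (Ideal.span {z}) q := by
      rintro _ _ ⟨rfl, rfl⟩
      rw [Ideal.Quotient.mk_singleton_self, map_zero]
    have hmk := congrArg (RingQuot.lift ⟨_, hrel⟩) ha
    rw [RingQuot.lift_mkRingHom_apply, map_zero, Ideal.Quotient.eq_zero_iff_mem,
      Ideal.mem_span_singleton'] at hmk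
    obtain ⟨w, rfl⟩ := hmk
    exact ⟨w, ((hz w).eq).symm⟩
  · rintro ⟨w, rfl⟩
    rw [map_mul, RingQuot.mkRingHom_rel ⟨rfl, rfl⟩, map_zero, zero_mul]

theorem RingQuot.rightAnnihilator_eq_of_isLeftRegular (hz : ∀ s, Commute z s) {f h : S}
    (hfh : z = f * h) (hf : IsLeftRegular f) :
    {s : RingQuot (fun a b : S => a = z ∧ b = 0) |
        ∀ g, g * RingQuot.mkRingHom (fun a b : S => a = z ∧ b = 0) f * s = 0}
      = {s | ∃ r, s = RingQuot.mkRingHom (fun a b : S => a = z ∧ b = 0) h * r} := by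
  set mk := RingQuot.mkRingHom (fun a b : S => a = z ∧ b = 0)
  ext s
  constructor
  · intro hs
    obtain ⟨t, rfl⟩ := RingQuot.mkRingHom_surjective _ s
    have hft : mk (f * t) = 0 := by simpa using hs 1
    obtain ⟨w, hw⟩ := (RingQuot.mkRingHom_eq_zero_iff_of_commute hz _).1 hft
    have hfhw : f * t = f * (h * w) := by rw [hw, hfh, mul_assoc]
    exact ⟨mk w, by rw [← map_mul, hf hfhw]⟩
  · rintro ⟨r, rfl⟩ g
    have hz0 : mk z = 0 := (RingQuot.mkRingHom_eq_zero_iff_of_commute hz z).2 ⟨1, (mul_one z).symm⟩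
    rw [mul_assoc, ← mul_assoc (mk f), ← map_mul, ← hfh, hz0, zero_mul, mul_zero]

end CentralQuotient

theorem stmt13_general {C S : Type*} [CommRing C] [Ring S]
    (σ : C ≃+* C) (n : ℕ) (hσn : ∀ a : C, (⇑σ)^[n] a = a)
    (u : Cˣ) (huσ : σ (u : C) = u)
    (ι : C →+* S) (x : S) (hx : ∀ a : C, x * ι a = ι (σ a) * x)
    (rep : (ℕ →₀ C) ≃+ S)
    (hrep : ∀ p : ℕ →₀ C, rep p = ∑ k ∈ p.support, ι (p k) * x ^ k)
    (f h : S)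
    (hmonic : ∃ d : ℕ, rep.symm f d = 1 ∧ ∀ k, d < k → rep.symm f k = 0)
    (hfh : x ^ n - ι u = f * h) :
    {s : RingQuot (fun a b : S => a = x ^ n - ι u ∧ b = 0) |
        ∀ g : RingQuot (fun a b : S => a = x ^ n - ι u ∧ b = 0),
          g * RingQuot.mkRingHom (fun a b : S => a = x ^ n - ι u ∧ b = 0) f * s = 0}
      = {s : RingQuot (fun a b : S => a = x ^ n - ι u ∧ b = 0) |
          ∃ r : RingQuot (fun a b : S => a = x ^ n - ι u ∧ b = 0),
            s = RingQuot.mkRingHom (fun a b : S => a = x ^ n - ι u ∧ b = 0) h * r} := by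
  obtain ⟨d, hfd, hf⟩ := hmonic
  have hcentral : ∀ s, Commute (x ^ n - ι u) s :=
    commute_pow_sub_of_iterate_eq_self (σ := (σ : C →+* C)) hx hrep hσn huσ
  have hreg : IsLeftRegular f := isLeftRegular_of_non_zero_divisor f fun t hft =>
    eq_zero_of_monic_mul_eq_zero (σ := (σ : C →+* C)) hx hrep σ.injective hfd hf hft
  exact RingQuot.rightAnnihilator_eq_of_isLeftRegular hcentral hfh hreg

/-- Let `C` be commutative, `σ` an automorphism with `σ^n = id`, `u` a
unit fixed by `σ`, and `ℛ = C[x;σ]/⟨x^n − u⟩` (realized as a `RingQuot` of the abstract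
skew polynomial ring `S = C[x;σ]`). If `f ∈ S` is monic with `x^n − u = f·h`, then the
right annihilator of the left ideal `ℛf̄` in `ℛ` is the right ideal `h̄ℛ`. -/
theorem stmt13 {C S : Type*} [CommRing C] [Ring S]
    (σ : C ≃+* C) (n : ℕ) (hn : 0 < n) (hσn : ∀ a : C, (⇑σ)^[n] a = a)
    (u : Cˣ) (huσ : σ (u : C) = u)
    (ι : C →+* S) (x : S) (hx : ∀ a : C, x * ι a = ι (σ a) * x)
    (rep : (ℕ →₀ C) ≃+ S)
    (hrep : ∀ p : ℕ →₀ C, rep p = ∑ k ∈ p.support, ι (p k) * x ^ k)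
    (f h : S)
    (hmonic : ∃ d : ℕ, rep.symm f d = 1 ∧ ∀ k, d < k → rep.symm f k = 0)
    (hfh : x ^ n - ι u = f * h) :
    {s : RingQuot (fun a b : S => a = x ^ n - ι u ∧ b = 0) |
        ∀ g : RingQuot (fun a b : S => a = x ^ n - ι u ∧ b = 0),
          g * RingQuot.mkRingHom (fun a b : S => a = x ^ n - ι u ∧ b = 0) f * s = 0}
      = {s : RingQuot (fun a b : S => a = x ^ n - ι u ∧ b = 0) |
          ∃ r : RingQuot (fun a b : S => a = x ^ n - ι u ∧ b = 0),
            s = RingQuot.mkRingHom (fun a b : S => a = x ^ n - ι u ∧ b = 0) h * r} :=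
  stmt13_general σ n hσn u huσ ι x hx rep hrep f h hmonic hfh
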